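/- arXiv:2411.19906 — 6 statements merged into one kernel-verified Lean document; each statement's English description precedes it below -/
import Mathlib

section
/- Let θ = (w_0,…,w_m) be a sequence of strings over a finite alphabet V with m ≥ 1, and let τ : V → V* satisfy w_{i+1} = τ(w_i[1])τ(w_i[2])⋯τ(w_i[|w_i|]) for every 0 ≤ i ≤ m−1. For 0 ≤ i ≤ m−1 and 1 ≤ j ≤ |w_i| define s_{i,j} = 1 + Σ_{j'=1}^{j−1} |τ(w_i[j'])| and e_{i,j} = s_{i,j} + |τ(w_i[j])|. Then each (i,j,s_{i,j},e_{i,j}) is a vertex of the characteristic graph G_θ, and the set I = {(i,j,s_{i,j},e_{i,j}) : 0 ≤ i ≤ m−1, 1 ≤ j ≤ |w_i|} is an independent set of G_θ of cardinality k = Σ_{i=0}^{m−1} |w_i|. -/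
/-!
In `w (i+1) = τ (w i)[0] ++ ⋯ ++ τ (w i)[|w i| - 1]` the canonical window `[s i j, e i j)` is
exactly the block `τ (w i)[j-1]`. Consecutive blocks abut (`e i j = s i (j+1)`), the first starts
at `1` and the last ends at `|w (i+1)| + 1`, so the quadruples are vertices and rules (c), (d)
never apply; rule (b) never applies because equal letters have equal images under `τ`.
-/

/-- `seg S s e` is the substring `S[s:e]`: from position `s` (inclusive, 1-indexed)
to position `e` (exclusive). -/
def seg {V : Type*} (S : List V) (s e : ℕ) : List V := (S.take (e - 1)).drop (s - 1)

/-- Vertices of the characteristic graph `G_θ` of `θ = (w 0, …, w m)`: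
quadruples `(i, j, s, e)` with `0 ≤ i ≤ m-1`, `1 ≤ j ≤ |w i|`,
`1 ≤ s ≤ e ≤ |w (i+1)| + 1`, `s = 1` if `j = 1`, and `e = |w (i+1)| + 1` if `j = |w i|`. -/
def isVert {V : Type*} (w : ℕ → List V) (m : ℕ) : ℕ × ℕ × ℕ × ℕ → Prop
  | (i, j, s, e) =>
    i < m ∧ 1 ≤ j ∧ j ≤ (w i).length ∧ 1 ≤ s ∧ s ≤ e ∧ e ≤ (w (i + 1)).length + 1 ∧
    (j = 1 → s = 1) ∧ (j = (w i).length → e = (w (i + 1)).length + 1)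

/-- Adjacency in the characteristic graph `G_θ`. -/
def adj {V : Type*} (w : ℕ → List V) (m : ℕ) : ℕ × ℕ × ℕ × ℕ → ℕ × ℕ × ℕ × ℕ → Prop
  | (i₁, j₁, s₁, e₁), (i₂, j₂, s₂, e₂) =>
    isVert w m (i₁, j₁, s₁, e₁) ∧ isVert w m (i₂, j₂, s₂, e₂) ∧
    (i₁, j₁, s₁, e₁) ≠ (i₂, j₂, s₂, e₂) ∧
    ((i₁ = i₂ ∧ j₁ = j₂) ∨
     ((w i₁)[j₁ - 1]? = (w i₂)[j₂ - 1]? ∧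
       seg (w (i₁ + 1)) s₁ e₁ ≠ seg (w (i₂ + 1)) s₂ e₂) ∨
     (i₁ = i₂ ∧ j₂ = j₁ + 1 ∧ e₁ ≠ s₂) ∨
     (i₁ = i₂ ∧ j₁ = j₂ + 1 ∧ e₂ ≠ s₁))

/-- `I` is an independent set of the characteristic graph `G_θ`. -/
def IsIndepSet {V : Type*} (w : ℕ → List V) (m : ℕ) (I : Finset (ℕ × ℕ × ℕ × ℕ)) : Prop :=
  (∀ v ∈ I, isVert w m v) ∧ ∀ u ∈ I, ∀ v ∈ I, ¬ adj w m u v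

/-- The 0-indexed position at which the block `τ l[k]` starts in `(l.map τ).flatten`;
the paper's `s_{i,j}` is `1 + blockStart τ (w i) (j - 1)`. -/
def blockStart {V : Type*} (τ : V → List V) (l : List V) (k : ℕ) : ℕ :=
  ((l.take k).map τ).flatten.length

section BlockStart

variable {V : Type*} (τ : V → List V) (l : List V)

lemma blockStart_succ {k : ℕ} (hk : k < l.length) :
    blockStart τ l (k + 1) = blockStart τ l k + (τ l[k]).length := by
  rw [blockStart, blockStart, List.take_add_one, List.getElem?_eq_getElem hk]
  simp only [Option.toList_some, List.map_append, List.flatten_append, List.length_append,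
    List.map_singleton, List.flatten_singleton]

lemma blockStart_le (k : ℕ) : blockStart τ l k ≤ (l.map τ).flatten.length :=
  (((List.take_prefix k l).map τ).flatten).length_le

lemma blockStart_length : blockStart τ l l.length = (l.map τ).flatten.length := by
  simp [blockStart]

lemma seg_flatten_map_blockStart {k : ℕ} (hk : k < l.length) :
    seg (l.map τ).flatten (1 + blockStart τ l k) (1 + blockStart τ l (k + 1)) = τ l[k] := by
  have := List.drop_take_succ_flatten_eq_getElem (l.map τ) k (by simpa using hk)
  simpa [seg, blockStart, List.length_flatten, List.map_take] using this

end BlockStart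

lemma Finset.card_biUnion_image_mk {ι κ β : Type*} [DecidableEq ι] [DecidableEq κ] [DecidableEq β]
    (A : Finset ι) (B : ι → Finset κ) (x : ι → κ → β) :
    (A.biUnion fun i => (B i).image fun j => (i, j, x i j)).card = ∑ i ∈ A, (B i).card := by
  rw [Finset.card_biUnion]
  · refine Finset.sum_congr rfl fun i _ => Finset.card_image_of_injective _ ?_
    intro j j' h
    exact (Prod.ext_iff.mp (Prod.ext_iff.mp h).2).1
  · intro i _ i' _ hii'
    simp only [Function.onFun, Finset.disjoint_left, Finset.mem_image]
    rintro _ ⟨j, -, rfl⟩ ⟨j', -, h⟩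
    exact hii' (Prod.ext_iff.mp h).1.symm

section Canonical

variable {V : Type*} {m : ℕ} {w : ℕ → List V} {τ : V → List V} {s e : ℕ → ℕ → ℕ}
  (hs : ∀ i j, s i j = 1 + (((w i).take (j - 1)).map τ).flatten.length)
  (he : ∀ i j a, (w i)[j - 1]? = some a → e i j = s i j + (τ a).length)
include hs

lemma s_succ_eq_blockStart (i k : ℕ) : s i (k + 1) = 1 + blockStart τ (w i) k :=
  hs i (k + 1)

include he

lemma e_succ_eq_blockStart {i k : ℕ} (hk : k < (w i).length) :
    e i (k + 1) = 1 + blockStart τ (w i) (k + 1) := by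
  rw [he i (k + 1) _ (List.getElem?_eq_getElem hk), s_succ_eq_blockStart hs,
    blockStart_succ τ _ hk, Nat.add_assoc]

lemma e_eq_s_succ {i j : ℕ} (hj : 1 ≤ j) (hjw : j ≤ (w i).length) : e i j = s i (j + 1) := by
  obtain ⟨k, rfl⟩ := Nat.exists_eq_add_of_le' hj
  rw [e_succ_eq_blockStart hs he hjw, s_succ_eq_blockStart hs]

variable (hτ : ∀ i < m, w (i + 1) = ((w i).map τ).flatten)
include hτ

lemma isVert_canonical {i j : ℕ} (hi : i < m) (hj : 1 ≤ j) (hjw : j ≤ (w i).length) :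
    isVert w m (i, j, s i j, e i j) := by
  obtain ⟨k, rfl⟩ := Nat.exists_eq_add_of_le' hj
  have hs' := s_succ_eq_blockStart hs i k
  have he' := e_succ_eq_blockStart hs he hjw
  have hstep := blockStart_succ τ (w i) hjw
  have hle := blockStart_le τ (w i) (k + 1)
  have hlen : (w (i + 1)).length = (((w i).map τ).flatten).length := by rw [hτ i hi]
  refine ⟨hi, hj, hjw, by omega, by omega, by omega, fun h => ?_, fun h => ?_⟩
  · obtain rfl : k = 0 := by omega
    simpa [blockStart] using hs'
  · rw [he', h, blockStart_length, hlen, Nat.add_comm]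

lemma seg_canonical {i j : ℕ} (hi : i < m) (hj : 1 ≤ j) (hjw : j ≤ (w i).length) :
    seg (w (i + 1)) (s i j) (e i j) = τ (w i)[j - 1] := by
  obtain ⟨k, rfl⟩ := Nat.exists_eq_add_of_le' hj
  rw [s_succ_eq_blockStart hs, e_succ_eq_blockStart hs he hjw, hτ i hi]
  exact seg_flatten_map_blockStart τ (w i) hjw

lemma not_adj_canonical {i₁ j₁ i₂ j₂ : ℕ}
    (hi₁ : i₁ < m) (hj₁ : 1 ≤ j₁) (hjw₁ : j₁ ≤ (w i₁).length)
    (hi₂ : i₂ < m) (hj₂ : 1 ≤ j₂) (hjw₂ : j₂ ≤ (w i₂).length) :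
    ¬ adj w m (i₁, j₁, s i₁ j₁, e i₁ j₁) (i₂, j₂, s i₂ j₂, e i₂ j₂) := by
  rintro ⟨-, -, hne, ⟨rfl, rfl⟩ | ⟨hletter, hseg⟩ | ⟨rfl, rfl, hgap⟩ | ⟨rfl, rfl, hgap⟩⟩
  · exact hne rfl
  · have hletter' : (w i₁)[j₁ - 1] = (w i₂)[j₂ - 1] := by
      simpa [List.getElem?_eq_getElem (show j₁ - 1 < (w i₁).length by omega),
        List.getElem?_eq_getElem (show j₂ - 1 < (w i₂).length by omega)] using hletter
    apply hseg
    rw [seg_canonical hs he hτ hi₁ hj₁ hjw₁, seg_canonical hs he hτ hi₂ hj₂ hjw₂, hletter']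
  · exact hgap (e_eq_s_succ hs he hj₁ hjw₁)
  · exact hgap (e_eq_s_succ hs he hj₂ hjw₂)

end Canonical

theorem canonical_indepSet_of_compatible_general {V : Type*}
    (m : ℕ) (w : ℕ → List V)
    (τ : V → List V) (hτ : ∀ i < m, w (i + 1) = ((w i).map τ).flatten)
    (s e : ℕ → ℕ → ℕ)
    (hs : ∀ i j, s i j = 1 + (((w i).take (j - 1)).map τ).flatten.length)
    (he : ∀ i j a, (w i)[j - 1]? = some a → e i j = s i j + (τ a).length)
    (I : Finset (ℕ × ℕ × ℕ × ℕ))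
    (hI : I = (Finset.range m).biUnion fun i =>
      (Finset.Icc 1 (w i).length).image fun j => (i, j, s i j, e i j)) :
    (∀ i < m, ∀ j, 1 ≤ j → j ≤ (w i).length → isVert w m (i, j, s i j, e i j)) ∧
    IsIndepSet w m I ∧ I.card = ∑ i ∈ Finset.range m, (w i).length := by
  have hmem : ∀ v ∈ I, ∃ i < m, ∃ j, 1 ≤ j ∧ j ≤ (w i).length ∧ v = (i, j, s i j, e i j) := by
    intro v hv
    simp only [hI, Finset.mem_biUnion, Finset.mem_range, Finset.mem_image, Finset.mem_Icc] at hv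
    obtain ⟨i, hi, j, ⟨hj, hjw⟩, rfl⟩ := hv
    exact ⟨i, hi, j, hj, hjw, rfl⟩
  refine ⟨fun i hi j hj hjw => isVert_canonical hs he hτ hi hj hjw, ⟨?_, ?_⟩, ?_⟩
  · intro v hv
    obtain ⟨i, hi, j, hj, hjw, rfl⟩ := hmem v hv
    exact isVert_canonical hs he hτ hi hj hjw
  · intro u hu v hv
    obtain ⟨i₁, hi₁, j₁, hj₁, hjw₁, rfl⟩ := hmem u hu
    obtain ⟨i₂, hi₂, j₂, hj₂, hjw₂, rfl⟩ := hmem v hv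
    exact not_adj_canonical hs he hτ hi₁ hj₁ hjw₁ hi₂ hj₂ hjw₂
  · simp only [hI, Finset.card_biUnion_image_mk, Nat.card_Icc, Nat.add_sub_cancel]

/-- If `τ` generates θ, then the canonical quadruples
`(i, j, s_{i,j}, e_{i,j})` with `s_{i,j} = 1 + Σ_{j'=1}^{j-1} |τ(w_i[j'])|` and
`e_{i,j} = s_{i,j} + |τ(w_i[j])|` are vertices of `G_θ`, and they form an
independent set of cardinality `k = Σ_{i<m} |w i|`. -/
theorem canonical_indepSet_of_compatible {V : Type*} [Fintype V]
    (m : ℕ) (hm : 1 ≤ m) (w : ℕ → List V)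
    (τ : V → List V) (hτ : ∀ i < m, w (i + 1) = ((w i).map τ).flatten)
    (s e : ℕ → ℕ → ℕ)
    (hs : ∀ i j, s i j = 1 + (((w i).take (j - 1)).map τ).flatten.length)
    (he : ∀ i j a, (w i)[j - 1]? = some a → e i j = s i j + (τ a).length)
    (I : Finset (ℕ × ℕ × ℕ × ℕ))
    (hI : I = (Finset.range m).biUnion fun i =>
      (Finset.Icc 1 (w i).length).image fun j => (i, j, s i j, e i j)) :
    (∀ i < m, ∀ j, 1 ≤ j → j ≤ (w i).length → isVert w m (i, j, s i j, e i j)) ∧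
    IsIndepSet w m I ∧ I.card = ∑ i ∈ Finset.range m, (w i).length :=
  canonical_indepSet_of_compatible_general m w τ hτ s e hs he I hI
end

section
/- Let G be a simple graph on the vertex set {1,…,n} with QUBO matrix Q, and let T be a subset of the vertices that is not an independent set, with a, b ∈ T adjacent in G. Then the set S = T \ {b} satisfies f(x_S) < f(x_T). In particular, for every non-independent set T there exists a proper subset S ⊂ T with f(x_S) < f(x_T). -/
open scoped Classical Matrix

/-- The QUBO matrix of a simple graph `G` on `{1,…,n}`:
`Q i i = -1`, `Q i j = 1` if `{i,j}` is an edge, and `Q i j = 0` otherwise. -/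
noncomputable def quboQ {n : ℕ} (G : SimpleGraph (Fin n)) : Matrix (Fin n) (Fin n) ℤ :=
  fun i j => if i = j then -1 else if G.Adj i j then 1 else 0

/-- The indicator vector `x_T ∈ {0,1}ⁿ` of a set of vertices `T`. -/
def indVec {n : ℕ} (T : Finset (Fin n)) : Fin n → ℤ := fun i => if i ∈ T then 1 else 0

/-- The QUBO objective `f(x) = xᵀ Q x`. -/
noncomputable def quboF {n : ℕ} (G : SimpleGraph (Fin n)) (x : Fin n → ℤ) : ℤ :=
  x ⬝ᵥ (quboQ G).mulVec x

/-- `E(T)`: the set of edges of `G` with both endpoints in `T`. -/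
noncomputable def edgesIn {n : ℕ} (G : SimpleGraph (Fin n)) (T : Finset (Fin n)) :
    Finset (Sym2 (Fin n)) :=
  G.edgeFinset.filter fun e => ∀ v ∈ e, v ∈ T

/-- `T` is an independent set of `G`: no edge of `G` has both endpoints in `T`. -/
def IsIndep {n : ℕ} (G : SimpleGraph (Fin n)) (T : Finset (Fin n)) : Prop :=
  ∀ a ∈ T, ∀ b ∈ T, ¬ G.Adj a b

lemma quboF_indVec_eq {n : ℕ} (G : SimpleGraph (Fin n)) (T : Finset (Fin n)) :
    quboF G (indVec T) = ∑ i ∈ T, ∑ j ∈ T, quboQ G i j := by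
  unfold quboF indVec
  simp only [dotProduct, Matrix.mulVec, ite_mul, one_mul, zero_mul,
    Finset.sum_ite_mem, Finset.univ_inter]
  refine Finset.sum_congr rfl fun i _ => ?_
  simp only [mul_ite, mul_one, mul_zero, Finset.sum_ite_mem, Finset.univ_inter]

/-- If `T` is not independent, witnessed by adjacent `a, b ∈ T`,
then `S = T \ {b}` satisfies `f(x_S) < f(x_T)`; in particular, every non-independent
`T` has a proper subset `S ⊂ T` with `f(x_S) < f(x_T)`. -/
theorem quboF_erase_lt_of_not_indep {n : ℕ} (G : SimpleGraph (Fin n))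
    (T : Finset (Fin n)) (hT : ¬ IsIndep G T)
    (a b : Fin n) (ha : a ∈ T) (hb : b ∈ T) (hab : G.Adj a b) :
    quboF G (indVec (T.erase b)) < quboF G (indVec T) ∧
    ∃ S ⊂ T, quboF G (indVec S) < quboF G (indVec T) := by
  have hane : a ≠ b := hab.ne
  have haS : a ∈ T.erase b := Finset.mem_erase.2 ⟨hane, ha⟩
  have hQbb : quboQ G b b = -1 := by simp [quboQ]
  have hnonneg : ∀ i j : Fin n, i ≠ j → 0 ≤ quboQ G i j := by
    intro i j hij
    simp only [quboQ, if_neg hij]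
    split <;> simp
  have hA : (1 : ℤ) ≤ ∑ i ∈ T.erase b, quboQ G i b := by
    have h1 : quboQ G a b = 1 := by simp [quboQ, hane, hab]
    calc (1:ℤ) = quboQ G a b := h1.symm
      _ ≤ ∑ i ∈ T.erase b, quboQ G i b :=
        Finset.single_le_sum (fun i hi => hnonneg i b (Finset.ne_of_mem_erase hi)) haS
  have hB : (1 : ℤ) ≤ ∑ j ∈ T.erase b, quboQ G b j := by
    have h1 : quboQ G b a = 1 := by simp [quboQ, hane.symm, hab.symm]
    calc (1:ℤ) = quboQ G b a := h1.symm
      _ ≤ ∑ j ∈ T.erase b, quboQ G b j :=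
        Finset.single_le_sum (fun j hj => hnonneg b j (Finset.ne_of_mem_erase hj).symm) haS
  have hsplit : ∑ i ∈ T, ∑ j ∈ T, quboQ G i j =
      (∑ i ∈ T.erase b, ∑ j ∈ T.erase b, quboQ G i j)
        + (∑ i ∈ T.erase b, quboQ G i b) + ((∑ j ∈ T.erase b, quboQ G b j) + quboQ G b b) := by
    rw [← Finset.sum_erase_add T _ hb]
    congr 1
    · rw [← Finset.sum_add_distrib]
      refine Finset.sum_congr rfl fun i _ => ?_
      rw [Finset.sum_erase_add T _ hb]
    · rw [Finset.sum_erase_add T _ hb]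
  have hlt : quboF G (indVec (T.erase b)) < quboF G (indVec T) := by
    rw [quboF_indVec_eq, quboF_indVec_eq, hsplit, hQbb]
    linarith
  exact ⟨hlt, T.erase b, Finset.erase_ssubset hb, hlt⟩
end

section
/- Let G be a simple graph on the vertex set {1,…,n} with QUBO matrix Q, and let T be a subset of the vertices that is not an independent set. Then there exists an independent set S ⊂ T such that f(x_S) < f(x_T). -/
open scoped Classical Matrix

/-!
Deleting from `T` a vertex `a` that has a neighbour in `T` changes `f(x_T)` by
`-(2 · #(neighbours of a in T) - 1) < 0`. Hence a minimiser `S` of `f(x_·)` over the subsets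
of `T` is independent, and it lies strictly below `f(x_T)` because some vertex of the
non-independent set `T` can be deleted with a strict decrease.
-/

theorem Matrix.IsSymm.sum_sum_eq_sum_sum_erase_add {ι R : Type*} [CommSemiring R]
    [DecidableEq ι] {M : Matrix ι ι R} (hM : M.IsSymm) {s : Finset ι} {a : ι} (ha : a ∈ s) :
    ∑ i ∈ s, ∑ j ∈ s, M i j =
      ∑ i ∈ s.erase a, ∑ j ∈ s.erase a, M i j + 2 * ∑ j ∈ s.erase a, M a j + M a a := by
  have hcol : ∑ i ∈ s.erase a, M i a = ∑ j ∈ s.erase a, M a j :=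
    Finset.sum_congr rfl fun i _ => hM.apply a i
  simp only [← Finset.sum_erase_add s _ ha, Finset.sum_add_distrib, hcol]
  ring

lemma indVec_dotProduct_mulVec_indVec {n : ℕ} (M : Matrix (Fin n) (Fin n) ℤ)
    (T : Finset (Fin n)) :
    indVec T ⬝ᵥ M *ᵥ indVec T = ∑ i ∈ T, ∑ j ∈ T, M i j := by
  simp only [dotProduct, Matrix.mulVec, indVec, mul_ite, mul_one, mul_zero, ite_mul, one_mul,
    zero_mul, Finset.sum_ite_mem, Finset.univ_inter]

lemma quboQ_isSymm {n : ℕ} (G : SimpleGraph (Fin n)) : (quboQ G).IsSymm := by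
  ext i j
  simp only [Matrix.transpose_apply, quboQ, eq_comm (a := j), G.adj_comm]

lemma quboQ_of_ne {n : ℕ} (G : SimpleGraph (Fin n)) {i j : Fin n} (h : i ≠ j) :
    quboQ G i j = if G.Adj i j then 1 else 0 :=
  if_neg h

lemma one_le_sum_quboQ {n : ℕ} (G : SimpleGraph (Fin n)) {s : Finset (Fin n)} {a b : Fin n}
    (ha : a ∉ s) (hb : b ∈ s) (hab : G.Adj a b) : 1 ≤ ∑ j ∈ s, quboQ G a j := by
  have hnonneg : ∀ j ∈ s, 0 ≤ quboQ G a j := fun j hj => by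
    rw [quboQ_of_ne G (ne_of_mem_of_not_mem hj ha).symm]
    split_ifs <;> norm_num
  calc (1 : ℤ) = quboQ G a b := by rw [quboQ_of_ne G hab.ne, if_pos hab]
    _ ≤ ∑ j ∈ s, quboQ G a j := Finset.single_le_sum hnonneg hb

lemma quboF_indVec_erase_lt {n : ℕ} (G : SimpleGraph (Fin n)) {T : Finset (Fin n)}
    {a b : Fin n} (ha : a ∈ T) (hb : b ∈ T) (hab : G.Adj a b) :
    quboF G (indVec (T.erase a)) < quboF G (indVec T) := by
  have hrow := one_le_sum_quboQ G (T.notMem_erase a) (T.mem_erase.2 ⟨hab.ne', hb⟩) hab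
  have hdiag : quboQ G a a = -1 := if_pos rfl
  simp only [quboF, indVec_dotProduct_mulVec_indVec,
    (quboQ_isSymm G).sum_sum_eq_sum_sum_erase_add ha, hdiag]
  linarith

lemma exists_quboF_indVec_erase_lt {n : ℕ} {G : SimpleGraph (Fin n)} {T : Finset (Fin n)}
    (hT : ¬ IsIndep G T) : ∃ a ∈ T, quboF G (indVec (T.erase a)) < quboF G (indVec T) := by
  simp only [IsIndep, not_forall, not_not] at hT
  obtain ⟨a, ha, b, hb, hab⟩ := hT
  exact ⟨a, ha, quboF_indVec_erase_lt G ha hb hab⟩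

/-- If `T` is not independent, then there is an independent set
`S ⊂ T` with `f(x_S) < f(x_T)`. -/
theorem exists_indep_subset_quboF_lt {n : ℕ} (G : SimpleGraph (Fin n))
    (T : Finset (Fin n)) (hT : ¬ IsIndep G T) :
    ∃ S ⊂ T, IsIndep G S ∧ quboF G (indVec S) < quboF G (indVec T) := by
  obtain ⟨S, hST, hmin⟩ := T.powerset.exists_min_image (fun S => quboF G (indVec S))
    ⟨T, Finset.mem_powerset_self T⟩
  rw [Finset.mem_powerset] at hST
  obtain ⟨a, ha, herase⟩ := exists_quboF_indVec_erase_lt hT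
  have hlt : quboF G (indVec S) < quboF G (indVec T) :=
    (hmin _ (Finset.mem_powerset.2 (T.erase_subset a))).trans_lt herase
  refine ⟨S, hST.ssubset_of_ne (by rintro rfl; exact hlt.false), ?_, hlt⟩
  by_contra hS
  obtain ⟨c, -, hc⟩ := exists_quboF_indVec_erase_lt hS
  exact (hmin _ (Finset.mem_powerset.2 ((S.erase_subset c).trans hST))).not_gt hc
end

section
/- Let G be a simple graph on the vertex set {1,…,n} with QUBO matrix Q, and let M and N be independent sets of G with |N| < |M|. Then f(x_M) < f(x_N). -/
open scoped Classical Matrix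

lemma quboF_indep {n : ℕ} (G : SimpleGraph (Fin n)) (T : Finset (Fin n))
    (hT : IsIndep G T) : quboF G (indVec T) = -T.card := by
  unfold quboF Matrix.mulVec dotProduct quboQ indVec
  simp only [Finset.mul_sum]
  rw [Finset.sum_comm]
  have : ∀ j : Fin n, ∑ i : Fin n,
      (if i ∈ T then (1:ℤ) else 0) *
        ((if i = j then -1 else if G.Adj i j then 1 else 0) *
          (if j ∈ T then 1 else 0)) = if j ∈ T then -1 else 0 := by
    intro j
    by_cases hj : j ∈ T
    · simp only [hj, if_true, mul_one]
      rw [Finset.sum_eq_single j]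
      · simp [hj]
      · intro i _ hij
        by_cases hi : i ∈ T
        · simp [hij, hT i hi j hj]
        · simp [hi]
      · simp
    · simp [hj]
  rw [Finset.sum_congr rfl fun j _ => this j]
  simp

/-- If `M` and `N` are independent sets with `|N| < |M|`, then
`f(x_M) < f(x_N)`. -/
theorem quboF_lt_of_card_lt {n : ℕ} (G : SimpleGraph (Fin n))
    (M N : Finset (Fin n)) (hM : IsIndep G M) (hN : IsIndep G N)
    (hcard : N.card < M.card) :
    quboF G (indVec M) < quboF G (indVec N) := by
  rw [quboF_indep G M hM, quboF_indep G N hN]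
  exact_mod_cast neg_lt_neg (by exact_mod_cast hcard)
end

section
/- Let G be a simple graph on the vertex set {1,…,n} with QUBO matrix Q, and let M be a maximum independent set of G. Then for every subset T of the vertices, f(x_M) ≤ f(x_T); that is, the indicator vector of a maximum independent set minimizes the function f(x) = xᵀ Q x over all binary vectors x ∈ {0,1}ⁿ. -/
open scoped Classical Matrix

/-- Ordered adjacent pairs with both coordinates in `T`. -/
noncomputable def adjPairs {n : ℕ} (G : SimpleGraph (Fin n)) (T : Finset (Fin n)) :
    Finset (Fin n × Fin n) :=
  (T ×ˢ T).filter fun p => G.Adj p.1 p.2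

lemma quboF_eq {n : ℕ} (G : SimpleGraph (Fin n)) (T : Finset (Fin n)) :
    quboF G (indVec T) = -(T.card : ℤ) + (adjPairs G T).card := by
  have hQ : ∀ i j, quboQ G i j =
      (if i = j then (-1:ℤ) else 0) + (if G.Adj i j then 1 else 0) := by
    intro i j
    by_cases h : i = j
    · subst h; simp [quboQ]
    · simp [quboQ, h]
  have h1 : quboF G (indVec T) = ∑ i ∈ T, ∑ j ∈ T, quboQ G i j := by
    unfold quboF dotProduct Matrix.mulVec dotProduct indVec
    simp [ite_mul, mul_ite, Finset.sum_ite_mem]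
  rw [h1]
  have h2 : ∑ i ∈ T, ∑ j ∈ T, quboQ G i j =
      (∑ i ∈ T, ∑ j ∈ T, (if i = j then (-1:ℤ) else 0)) +
      (∑ i ∈ T, ∑ j ∈ T, (if G.Adj i j then (1:ℤ) else 0)) := by
    rw [← Finset.sum_add_distrib]
    refine Finset.sum_congr rfl fun i _ => ?_
    rw [← Finset.sum_add_distrib]
    exact Finset.sum_congr rfl fun j _ => hQ i j
  rw [h2]
  congr 1
  · have : ∀ i ∈ T, ∑ j ∈ T, (if i = j then (-1:ℤ) else 0) = -1 := by
      intro i hi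
      rw [Finset.sum_ite_eq T i (fun _ => (-1:ℤ))]
      simp [hi]
    rw [Finset.sum_congr rfl this]
    simp
  · rw [adjPairs, ← Finset.sum_product']
    rw [Finset.sum_boole]

lemma key {n : ℕ} (G : SimpleGraph (Fin n)) (M : Finset (Fin n))
    (hmax : ∀ J : Finset (Fin n), (∀ a ∈ J, ∀ b ∈ J, ¬ G.Adj a b) → J.card ≤ M.card) :
    ∀ k (T : Finset (Fin n)), (adjPairs G T).card ≤ k →
      (T.card : ℤ) ≤ M.card + (adjPairs G T).card := by
  intro k
  induction k with
  | zero =>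
    intro T hT
    have hempty : adjPairs G T = ∅ := Finset.card_eq_zero.mp (Nat.le_zero.mp hT)
    have hind : ∀ a ∈ T, ∀ b ∈ T, ¬ G.Adj a b := by
      intro a ha b hb hab
      have : (a, b) ∈ adjPairs G T := by
        simp [adjPairs, ha, hb, hab]
      simp [hempty] at this
    have := hmax T hind
    simp [hempty]
    exact_mod_cast this
  | succ k ih =>
    intro T hT
    by_cases hne : (adjPairs G T).Nonempty
    · obtain ⟨⟨a, b⟩, hab⟩ := hne
      simp only [adjPairs, Finset.mem_filter, Finset.mem_product] at hab
      obtain ⟨⟨ha, hb⟩, hadj⟩ := hab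
      have hneq : a ≠ b := G.ne_of_adj hadj
      set T' := T.erase a with hT'
      have hpair : ({(a,b), (b,a)} : Finset (Fin n × Fin n)) ⊆ adjPairs G T := by
        intro p hp
        simp only [Finset.mem_insert, Finset.mem_singleton] at hp
        rcases hp with rfl | rfl <;>
          simp [adjPairs, ha, hb, hadj, hadj.symm]
      have hpaircard : ({(a,b), (b,a)} : Finset (Fin n × Fin n)).card = 2 := by
        rw [Finset.card_insert_of_notMem (by simp [hneq, Prod.ext_iff]), Finset.card_singleton]
      have hsub : adjPairs G T' ⊆ adjPairs G T \ {(a,b), (b,a)} := by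
        intro p hp
        simp only [adjPairs, Finset.mem_filter, Finset.mem_product, Finset.mem_erase, hT'] at hp
        obtain ⟨⟨⟨h1a, h1⟩, ⟨h2a, h2⟩⟩, hpadj⟩ := hp
        simp only [Finset.mem_sdiff, Finset.mem_insert, Finset.mem_singleton, adjPairs,
          Finset.mem_filter, Finset.mem_product]
        refine ⟨⟨⟨h1, h2⟩, hpadj⟩, ?_⟩
        rintro (rfl | rfl)
        · exact h1a rfl
        · exact h2a rfl
      have hcard2 : (adjPairs G T').card + 2 ≤ (adjPairs G T).card := by
        have := Finset.card_le_card hsub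
        rw [Finset.card_sdiff_of_subset hpair, hpaircard] at this
        have h2le : 2 ≤ (adjPairs G T).card := by
          calc 2 = ({(a,b), (b,a)} : Finset (Fin n × Fin n)).card := hpaircard.symm
            _ ≤ _ := Finset.card_le_card hpair
        omega
      have hT'card : T'.card + 1 = T.card := by
        rw [hT', Finset.card_erase_of_mem ha]
        have := Finset.card_pos.mpr ⟨a, ha⟩
        omega
      have hih := ih T' (by omega)
      have c1 : ((adjPairs G T').card : ℤ) + 2 ≤ ((adjPairs G T).card : ℤ) := by exact_mod_cast hcard2
      have c2 : (T'.card : ℤ) + 1 = T.card := by exact_mod_cast hT'card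
      linarith
    · have hempty : adjPairs G T = ∅ := Finset.not_nonempty_iff_eq_empty.mp hne
      have hind : ∀ a ∈ T, ∀ b ∈ T, ¬ G.Adj a b := by
        intro a ha b hb hab
        have : (a, b) ∈ adjPairs G T := by simp [adjPairs, ha, hb, hab]
        simp [hempty] at this
      have := hmax T hind
      simp [hempty]
      exact_mod_cast this

/-- A maximum independent set `M` minimizes `f(x) = xᵀ Q x`:
`f(x_M) ≤ f(x_T)` for every subset `T` of the vertices. -/
theorem quboF_max_indep_le {n : ℕ} (G : SimpleGraph (Fin n))
    (M : Finset (Fin n)) (hM : IsIndep G M)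
    (hmax : ∀ J : Finset (Fin n), IsIndep G J → J.card ≤ M.card)
    (T : Finset (Fin n)) :
    quboF G (indVec M) ≤ quboF G (indVec T) := by
  rw [quboF_eq, quboF_eq]
  have hMempty : adjPairs G M = ∅ := by
    rw [Finset.eq_empty_iff_forall_notMem]
    rintro ⟨a, b⟩ h
    simp only [adjPairs, Finset.mem_filter, Finset.mem_product] at h
    exact hM a h.1.1 b h.1.2 h.2
  rw [hMempty]
  have := key G M hmax (adjPairs G T).card T le_rfl
  simp only [Finset.card_empty, Nat.cast_zero, add_zero]
  linarith
end

section
/- Let G be a simple graph on the vertex set {1,…,n} with QUBO matrix Q, and let M be a maximum independent set of G. Then for every subset T of the vertices, f(x_T) = f(x_M) if and only if T is itself a maximum independent set of G (equivalently, T is independent with |T| = |M|); in all other cases f(x_M) < f(x_T). -/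
open scoped Classical Matrix

noncomputable def pairCount {n : ℕ} (G : SimpleGraph (Fin n)) (T : Finset (Fin n)) : ℕ :=
  ((T ×ˢ T).filter fun p => G.Adj p.1 p.2).card

lemma quboF_ind {n : ℕ} (G : SimpleGraph (Fin n)) (T : Finset (Fin n)) :
    quboF G (indVec T) = (pairCount G T : ℤ) - T.card := by
  classical
  have hQ : ∀ i j : Fin n, quboQ G i j =
      (if G.Adj i j then (1:ℤ) else 0) + (if i = j then -1 else 0) := by
    intro i j
    by_cases h : i = j
    · subst h; simp [quboQ]
    · simp [quboQ, h]
  have : quboF G (indVec T) = ∑ i ∈ T, ∑ j ∈ T, quboQ G i j := by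
    unfold quboF dotProduct Matrix.mulVec indVec
    simp only [dotProduct]
    rw [← Finset.sum_subset (Finset.subset_univ T)]
    · refine Finset.sum_congr rfl fun i hi => ?_
      rw [← Finset.sum_subset (Finset.subset_univ T)]
      · simp [hi, Finset.mul_sum]
      · intro j _ hj; simp [hj]
    · intro i _ hi; simp [hi]
  rw [this]
  simp only [hQ, Finset.sum_add_distrib]
  have h1 : ∑ i ∈ T, ∑ j ∈ T, (if G.Adj i j then (1:ℤ) else 0) = (pairCount G T : ℤ) := by
    rw [← Finset.sum_product']
    simp [pairCount, Finset.sum_boole]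
  have h2 : ∑ i ∈ T, ∑ j ∈ T, (if i = j then (-1:ℤ) else 0) = -T.card := by
    rw [Finset.sum_congr rfl fun i hi => Finset.sum_ite_eq T i (fun _ => (-1:ℤ))]
    simp
  rw [h1, h2]; ring

lemma pairCount_indep {n : ℕ} (G : SimpleGraph (Fin n)) (T : Finset (Fin n))
    (h : IsIndep G T) : pairCount G T = 0 := by
  unfold pairCount
  rw [Finset.card_eq_zero, Finset.filter_eq_empty_iff]
  rintro ⟨a, b⟩ hab
  simp only [Finset.mem_product] at hab
  exact h a hab.1 b hab.2

lemma pairCount_ge_two {n : ℕ} (G : SimpleGraph (Fin n)) (T : Finset (Fin n))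
    (a b : Fin n) (ha : a ∈ T) (hb : b ∈ T) (hab : G.Adj a b) :
    2 ≤ pairCount G T := by
  have hne : a ≠ b := G.ne_of_adj hab
  have hsub : {(a, b), (b, a)} ⊆ (T ×ˢ T).filter fun p => G.Adj p.1 p.2 := by
    intro p hp
    simp only [Finset.mem_insert, Finset.mem_singleton] at hp
    rcases hp with rfl | rfl <;> simp [Finset.mem_filter, ha, hb, hab, hab.symm]
  calc 2 = ({(a, b), (b, a)} : Finset ((Fin n) × (Fin n))).card := by
        rw [Finset.card_insert_of_notMem (by simp [hne]), Finset.card_singleton]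
    _ ≤ _ := Finset.card_le_card hsub

lemma exists_indep_subset {n : ℕ} (G : SimpleGraph (Fin n)) (T : Finset (Fin n)) :
    ∃ J, J ⊆ T ∧ IsIndep G J ∧ 2 * T.card ≤ 2 * J.card + pairCount G T := by
  classical
  induction T using Finset.strongInduction with
  | _ T ih =>
    by_cases h : IsIndep G T
    · exact ⟨T, Finset.Subset.refl T, h, by omega⟩
    · simp only [IsIndep, not_forall] at h
      obtain ⟨a, ha, b, hb, hab⟩ := h
      rw [not_not] at hab
      have hne : a ≠ b := G.ne_of_adj hab
      set T' := T.erase a with hT'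
      have hss : T' ⊂ T := Finset.erase_ssubset ha
      obtain ⟨J, hJ, hJi, hJc⟩ := ih T' hss
      have hbT' : b ∈ T' := Finset.mem_erase.2 ⟨hne.symm, hb⟩
      have haT' : a ∉ T' := Finset.notMem_erase a T
      -- pairCount G T' + 2 ≤ pairCount G T
      have hpc : pairCount G T' + 2 ≤ pairCount G T := by
        have hsub : insert (a, b) (insert (b, a)
            ((T' ×ˢ T').filter fun p => G.Adj p.1 p.2)) ⊆
            (T ×ˢ T).filter fun p => G.Adj p.1 p.2 := by
          intro p hp
          simp only [Finset.mem_insert] at hp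
          rcases hp with rfl | rfl | hp
          · simp [Finset.mem_filter, ha, hb, hab]
          · simp [Finset.mem_filter, ha, hb, hab.symm]
          · simp only [Finset.mem_filter, Finset.mem_product] at hp ⊢
            exact ⟨⟨Finset.mem_of_mem_erase hp.1.1, Finset.mem_of_mem_erase hp.1.2⟩, hp.2⟩
        have h1 : (a, b) ∉ insert (b, a) ((T' ×ˢ T').filter fun p => G.Adj p.1 p.2) := by
          simp only [Finset.mem_insert, Finset.mem_filter, Finset.mem_product, Prod.mk.injEq,
            not_or]
          exact ⟨fun h => hne h.1, fun h => haT' h.1.1⟩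
        have h2 : (b, a) ∉ (T' ×ˢ T').filter fun p => G.Adj p.1 p.2 := by
          simp only [Finset.mem_filter, Finset.mem_product]
          exact fun h => haT' h.1.2
        have := Finset.card_le_card hsub
        rw [Finset.card_insert_of_notMem h1, Finset.card_insert_of_notMem h2] at this
        unfold pairCount
        omega
      have hcard : T'.card + 1 = T.card := Finset.card_erase_add_one ha
      exact ⟨J, hJ.trans (Finset.erase_subset a T), hJi, by omega⟩

/-- For a maximum independent set `M` and any subset `T`,
`f(x_T) = f(x_M)` iff `T` is itself a maximum independent set (equivalently, `T` is
independent with `|T| = |M|`); in all other cases `f(x_M) < f(x_T)`. -/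
theorem quboF_eq_iff_max_indep {n : ℕ} (G : SimpleGraph (Fin n))
    (M : Finset (Fin n)) (hM : IsIndep G M)
    (hmax : ∀ J : Finset (Fin n), IsIndep G J → J.card ≤ M.card)
    (T : Finset (Fin n)) :
    (quboF G (indVec T) = quboF G (indVec M) ↔ IsIndep G T ∧ T.card = M.card) ∧
    (¬ (IsIndep G T ∧ T.card = M.card) →
      quboF G (indVec M) < quboF G (indVec T)) := by
  have hfT := quboF_ind G T
  have hfM := quboF_ind G M
  rw [pairCount_indep G M hM] at hfM
  have hstrict : ¬ (IsIndep G T ∧ T.card = M.card) →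
      quboF G (indVec M) < quboF G (indVec T) := by
    intro hcon
    rw [hfT, hfM]
    by_cases hT : IsIndep G T
    · have h1 : T.card ≤ M.card := hmax T hT
      have h2 : T.card ≠ M.card := fun h => hcon ⟨hT, h⟩
      rw [pairCount_indep G T hT]
      push_cast
      omega
    · simp only [IsIndep, not_forall] at hT
      obtain ⟨a, ha, b, hb, hab⟩ := hT
      rw [not_not] at hab
      have h2 : 2 ≤ pairCount G T := pairCount_ge_two G T a b ha hb hab
      obtain ⟨J, hJ, hJi, hJc⟩ := exists_indep_subset G T
      have h3 : J.card ≤ M.card := hmax J hJi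
      push_cast
      omega
  refine ⟨⟨fun heq => ?_, fun ⟨hT, hc⟩ => ?_⟩, hstrict⟩
  · by_contra hcon
    exact absurd heq (ne_of_gt (heq ▸ hstrict hcon)).symm
  · rw [hfT, hfM, pairCount_indep G T hT, hc]
end
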